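/- arXiv:2104.00075 — 4 statements merged into one kernel-verified Lean document; each statement's English description precedes it below -/
import Mathlib

section
/- Let Λ be a finite nonempty type, let N be a natural number, let Π : EuclideanSpace ℝ (Fin N) → Λ → ℝ be such that for every λ ∈ Λ the map θ ↦ Π(θ, λ) is differentiable, Π(θ, λ) > 0 for all θ and λ, and ∑_{λ∈Λ} Π(θ, λ) = 1 for every θ. Let R : Λ → ℝ and let μ ∈ ℝ. Define E_θ[f] = ∑_{λ∈Λ} Π(θ, λ) f(λ) and the risk-sensitive return J̃(θ) = E_θ[R] − (μ/2)·(E_θ[R²] − (E_θ[R])²). Then for every θ, the gradient of J̃ at θ equals ∑_{λ∈Λ} Π(θ, λ) · ((1 + μ·E_θ[R])·R(λ) − (μ/2)·R(λ)²) · ∇_θ(log Π(·, λ))(θ). -/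
/-!
Differentiating term by term, `∇J̃(θ) = ∑ λ, c(λ) • ∇Π(·, λ)(θ)` with
`c(λ) = (1 + μ E_θ[R]) R(λ) − (μ/2) R(λ)²`, the factor `μ E_θ[R]` coming from the squared mean
inside the variance. The log-derivative trick `Π ∇log Π = ∇Π` then rewrites this sum as the
stated expectation.
-/

open Finset

section Gradient

variable {F : Type*} [NormedAddCommGroup F] [InnerProductSpace ℝ F] [CompleteSpace F]
  {f : F → ℝ} {x : F}

theorem gradient_log (hf : DifferentiableAt ℝ f x) (hx : f x ≠ 0) :
    gradient (fun y => Real.log (f y)) x = (f x)⁻¹ • gradient f x := by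
  rw [gradient, (hf.hasFDerivAt.log hx).fderiv, map_smul, gradient]

theorem smul_gradient_log (hf : DifferentiableAt ℝ f x) (hx : f x ≠ 0) :
    f x • gradient (fun y => Real.log (f y)) x = gradient f x := by
  rw [gradient_log hf hx, smul_smul, mul_inv_cancel₀ hx, one_smul]

theorem HasFDerivAt.gradient_eq_sum_smul {ι : Type*} [Fintype ι] {g : ι → F → ℝ} {c : ι → ℝ}
    (hf : HasFDerivAt f (∑ i, c i • fderiv ℝ (g i) x) x) :
    gradient f x = ∑ i, c i • gradient (g i) x := by
  simp only [gradient, hf.fderiv, map_sum, map_smul]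

end Gradient

section MeanVariance

variable {E : Type*} [NormedAddCommGroup E] [NormedSpace ℝ E] {ι : Type*} [Fintype ι]
  {P : E → ι → ℝ} {θ : E}

theorem hasFDerivAt_sum_mul_const (hP : ∀ l, DifferentiableAt ℝ (fun θ' => P θ' l) θ)
    (g : ι → ℝ) :
    HasFDerivAt (fun θ' => ∑ l, P θ' l * g l) (∑ l, g l • fderiv ℝ (fun θ' => P θ' l) θ) θ :=
  HasFDerivAt.fun_sum fun l _ => (hP l).hasFDerivAt.mul_const (g l)

theorem hasFDerivAt_meanVariance (hP : ∀ l, DifferentiableAt ℝ (fun θ' => P θ' l) θ)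
    (R : ι → ℝ) (μ : ℝ) :
    HasFDerivAt
      (fun θ' => (∑ l, P θ' l * R l) -
        (μ / 2) * ((∑ l, P θ' l * R l ^ 2) - (∑ l, P θ' l * R l) ^ 2))
      (∑ l, ((1 + μ * ∑ l', P θ l' * R l') * R l - (μ / 2) * R l ^ 2) •
        fderiv ℝ (fun θ' => P θ' l) θ) θ := by
  have hmean := hasFDerivAt_sum_mul_const hP R
  have hsecond := hasFDerivAt_sum_mul_const hP (fun l => R l ^ 2)
  refine (hmean.sub ((hsecond.sub (hmean.pow 2)).const_mul (μ / 2))).congr_fderiv ?_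
  simp only [smul_sum, ← sum_sub_distrib]
  refine sum_congr rfl fun l _ => ?_
  simp only [nsmul_eq_mul, Nat.cast_ofNat, Nat.add_one_sub_one, pow_one]
  module

end MeanVariance

theorem risk_sensitive_policy_gradient_general
    {Λ : Type*} [Fintype Λ] (N : ℕ)
    (P : EuclideanSpace ℝ (Fin N) → Λ → ℝ)
    (hdiff : ∀ l : Λ, Differentiable ℝ (fun θ => P θ l))
    (hpos : ∀ (θ : EuclideanSpace ℝ (Fin N)) (l : Λ), 0 < P θ l)
    (R : Λ → ℝ) (μ : ℝ) :
    ∀ θ : EuclideanSpace ℝ (Fin N),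
      gradient (fun θ' =>
          (∑ l : Λ, P θ' l * R l) -
            (μ / 2) * ((∑ l : Λ, P θ' l * (R l) ^ 2) - (∑ l : Λ, P θ' l * R l) ^ 2)) θ
        = ∑ l : Λ,
            (P θ l * ((1 + μ * ∑ l' : Λ, P θ l' * R l') * R l - (μ / 2) * (R l) ^ 2)) •
              gradient (fun θ' => Real.log (P θ' l)) θ := by
  intro θ
  have hP : ∀ l, DifferentiableAt ℝ (fun θ' => P θ' l) θ := fun l => (hdiff l).differentiableAt
  rw [(hasFDerivAt_meanVariance hP R μ).gradient_eq_sum_smul]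
  refine sum_congr rfl fun l _ => ?_
  rw [mul_smul, smul_comm, smul_gradient_log (hP l) (hpos θ l).ne']

/-- Proposition 1 (exact mean–variance form): the gradient of the second-order
approximation of the risk-sensitive episodic return
`J̃(θ) = E_θ[R] − (μ/2)·Var_θ(R)` over a finite trajectory space `Λ` equals
`∑ λ, Π(θ,λ) · ((1 + μ E_θ[R]) R(λ) − (μ/2) R(λ)²) · ∇_θ log Π(·,λ)`. -/
theorem risk_sensitive_policy_gradient
    {Λ : Type*} [Fintype Λ] [Nonempty Λ] (N : ℕ)
    (P : EuclideanSpace ℝ (Fin N) → Λ → ℝ)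
    (hdiff : ∀ l : Λ, Differentiable ℝ (fun θ => P θ l))
    (hpos : ∀ (θ : EuclideanSpace ℝ (Fin N)) (l : Λ), 0 < P θ l)
    (hsum : ∀ θ : EuclideanSpace ℝ (Fin N), ∑ l : Λ, P θ l = 1)
    (R : Λ → ℝ) (μ : ℝ) :
    ∀ θ : EuclideanSpace ℝ (Fin N),
      gradient (fun θ' =>
          (∑ l : Λ, P θ' l * R l) -
            (μ / 2) * ((∑ l : Λ, P θ' l * (R l) ^ 2) - (∑ l : Λ, P θ' l * R l) ^ 2)) θ
        = ∑ l : Λ,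
            (P θ l * ((1 + μ * ∑ l' : Λ, P θ l' * R l') * R l - (μ / 2) * (R l) ^ 2)) •
              gradient (fun θ' => Real.log (P θ' l)) θ :=
  risk_sensitive_policy_gradient_general N P hdiff hpos R μ
end

section
/- Let Λ be a finite nonempty type, let N be a natural number, let Π : EuclideanSpace ℝ (Fin N) → Λ → ℝ be such that for every λ ∈ Λ the map θ ↦ Π(θ, λ) is differentiable, Π(θ, λ) > 0 for all θ and λ, and ∑_{λ∈Λ} Π(θ, λ) = 1 for every θ. Let R : Λ → ℝ, write E_θ[f] = ∑_{λ∈Λ} Π(θ, λ) f(λ) and Var_θ(R) = E_θ[R²] − (E_θ[R])². Then for every θ, the gradient of the map θ ↦ Var_θ(R) at θ equals ∑_{λ∈Λ} Π(θ, λ) · (R(λ)² − 2·E_θ[R]·R(λ)) · ∇_θ(log Π(·, λ))(θ). -/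
section ScoreFunction

variable {F : Type*} [NormedAddCommGroup F] [InnerProductSpace ℝ F]
  {ι : Type*} [Fintype ι] {p : F → ι → ℝ} {x : F}

theorem hasFDerivAt_sum_mul_const_s3 (hp : ∀ l, DifferentiableAt ℝ (fun y => p y l) x)
    (f : ι → ℝ) :
    HasFDerivAt (fun y => ∑ l, p y l * f l) (∑ l, f l • fderiv ℝ (fun y => p y l) x) x :=
  HasFDerivAt.fun_sum fun l _ => by simpa using (hp l).hasFDerivAt.mul_const (f l)

theorem hasFDerivAt_sum_mul_sq_sub_sq (hp : ∀ l, DifferentiableAt ℝ (fun y => p y l) x)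
    (R : ι → ℝ) :
    HasFDerivAt (fun y => (∑ l, p y l * R l ^ 2) - (∑ l, p y l * R l) ^ 2)
      (∑ l, (R l ^ 2 - 2 * (∑ l', p x l' * R l') * R l) • fderiv ℝ (fun y => p y l) x) x := by
  have hmean := hasFDerivAt_sum_mul_const_s3 hp R
  refine ((hasFDerivAt_sum_mul_const_s3 hp (R · ^ 2)).sub (hmean.pow 2)).congr_fderiv ?_
  simp only [sub_smul, Finset.sum_sub_distrib, mul_smul, ← Finset.smul_sum, nsmul_eq_mul,
    Nat.cast_ofNat, Nat.add_one_sub_one, pow_one]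

variable [CompleteSpace F]

theorem gradient_sum_mul_sq_sub_sq (hp : ∀ l, DifferentiableAt ℝ (fun y => p y l) x)
    (R : ι → ℝ) :
    gradient (fun y => (∑ l, p y l * R l ^ 2) - (∑ l, p y l * R l) ^ 2) x
      = ∑ l, (R l ^ 2 - 2 * (∑ l', p x l' * R l') * R l) • gradient (fun y => p y l) x := by
  simp only [gradient, (hasFDerivAt_sum_mul_sq_sub_sq hp R).fderiv, map_sum, map_smul]

theorem gradient_log_eq_inv_smul_gradient {f : F → ℝ} (hf : DifferentiableAt ℝ f x)
    (hx : f x ≠ 0) : gradient (fun y => Real.log (f y)) x = (f x)⁻¹ • gradient f x := by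
  simp only [gradient, fderiv.log hf hx, map_smul]

end ScoreFunction

theorem variance_gradient_score_form_general
    {Λ : Type*} [Fintype Λ] (N : ℕ)
    (P : EuclideanSpace ℝ (Fin N) → Λ → ℝ)
    (hdiff : ∀ l : Λ, Differentiable ℝ (fun θ => P θ l))
    (hpos : ∀ (θ : EuclideanSpace ℝ (Fin N)) (l : Λ), 0 < P θ l)
    (R : Λ → ℝ) :
    ∀ θ : EuclideanSpace ℝ (Fin N),
      gradient (fun θ' =>
          (∑ l : Λ, P θ' l * (R l) ^ 2) - (∑ l : Λ, P θ' l * R l) ^ 2) θ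
        = ∑ l : Λ,
            (P θ l * ((R l) ^ 2 - 2 * (∑ l' : Λ, P θ l' * R l') * R l)) •
              gradient (fun θ' => Real.log (P θ' l)) θ := by
  intro θ
  rw [gradient_sum_mul_sq_sub_sq (fun l => hdiff l θ)]
  refine Finset.sum_congr rfl fun l _ => ?_
  -- the score `∇ log P = P⁻¹ • ∇ P` cancels the weight `P`
  rw [gradient_log_eq_inv_smul_gradient (hdiff l θ) (hpos θ l).ne', smul_smul,
    mul_comm _ (P θ l)⁻¹, inv_mul_cancel_left₀ (hpos θ l).ne']

/-- Gradient of the variance of the episodic reward in score-function form: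
`∇_θ Var_θ(R) = ∑ λ, Π(θ,λ) (R(λ)² − 2 E_θ[R] R(λ)) ∇_θ log Π(·,λ)`. -/
theorem variance_gradient_score_form
    {Λ : Type*} [Fintype Λ] [Nonempty Λ] (N : ℕ)
    (P : EuclideanSpace ℝ (Fin N) → Λ → ℝ)
    (hdiff : ∀ l : Λ, Differentiable ℝ (fun θ => P θ l))
    (hpos : ∀ (θ : EuclideanSpace ℝ (Fin N)) (l : Λ), 0 < P θ l)
    (hsum : ∀ θ : EuclideanSpace ℝ (Fin N), ∑ l : Λ, P θ l = 1)
    (R : Λ → ℝ) :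
    ∀ θ : EuclideanSpace ℝ (Fin N),
      gradient (fun θ' =>
          (∑ l : Λ, P θ' l * (R l) ^ 2) - (∑ l : Λ, P θ' l * R l) ^ 2) θ
        = ∑ l : Λ,
            (P θ l * ((R l) ^ 2 - 2 * (∑ l' : Λ, P θ l' * R l') * R l)) •
              gradient (fun θ' => Real.log (P θ' l)) θ :=
  variance_gradient_score_form_general N P hdiff hpos R
end

section
/- Let Λ be a finite nonempty type, let p : Λ → ℝ satisfy p(λ) ≥ 0 for all λ and ∑_{λ∈Λ} p(λ) = 1, and let R : Λ → ℝ. Write E[R] = ∑_{λ∈Λ} p(λ)·R(λ) and Var(R) = ∑_{λ∈Λ} p(λ)·R(λ)² − (E[R])². Define, for μ ≠ 0, CE(μ) = −(1/μ)·log(∑_{λ∈Λ} p(λ)·exp(−μ·R(λ))). Then the limit as μ → 0 (over μ ≠ 0) of (CE(μ) − E[R])/μ equals −(1/2)·Var(R). -/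
open Filter Topology Real

/-!
With `X = -R` and `K(t) = log ∑ λ, p λ * exp (t * X λ)` the cumulant generating function of `X`,
`CE(μ) = -K(μ)/μ`, so `(CE(μ) - E[R])/μ = -(K(μ) - μ K'(0))/μ²` since `K(0) = 0` and
`K'(0) = E[X]`. This is the second-order Taylor quotient of `K` at `0`, which one application of
L'Hôpital's rule turns into a difference quotient of `K'`; it tends to `K''(0)/2 = Var(X)/2`.
-/

theorem tendsto_sub_sub_div_sq_nhdsNE {f f' : ℝ → ℝ} {a b : ℝ}
    (hf : ∀ᶠ x in 𝓝 a, HasDerivAt f (f' x) x) (hf' : HasDerivAt f' b a) :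
    Tendsto (fun x => (f x - f a - (x - a) * f' a) / (x - a) ^ 2) (𝓝[≠] a) (𝓝 (b / 2)) := by
  have hf_cont : ContinuousAt f a := hf.self_of_nhds.continuousAt
  refine HasDerivAt.lhopital_zero_nhdsNE (f' := fun x => f' x - f' a) (g' := fun x => 2 * (x - a))
    ?_ ?_ ?_ ?_ ?_ ?_
  · filter_upwards [nhdsWithin_le_nhds hf] with x hx
    simpa using (hx.sub_const (f a)).fun_sub ((hasDerivAt_id' x).sub_const a |>.mul_const (f' a))
  · filter_upwards with x
    simpa using ((hasDerivAt_id' x).sub_const a).fun_pow 2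
  · filter_upwards [self_mem_nhdsWithin] with x hx
    exact mul_ne_zero two_ne_zero (sub_ne_zero.2 hx)
  · refine tendsto_nhdsWithin_of_tendsto_nhds ?_
    have : ContinuousAt (fun x => f x - f a - (x - a) * f' a) a := by fun_prop
    simpa using this.tendsto
  · refine tendsto_nhdsWithin_of_tendsto_nhds ?_
    have : ContinuousAt (fun x : ℝ => (x - a) ^ 2) a := by fun_prop
    simpa using this.tendsto
  · have := (hasDerivAt_iff_tendsto_slope.1 hf').div_const 2
    refine this.congr fun x => ?_
    rw [slope_def_field, div_div, mul_comm]

section WeightedMGF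

variable {ι : Type*} [Fintype ι] (p X : ι → ℝ)

/-- The `n`-th derivative of the moment generating function `mgfDeriv p X 0` of `X` under the
weights `p`. -/
noncomputable def mgfDeriv (n : ℕ) (t : ℝ) : ℝ := ∑ i, p i * X i ^ n * exp (t * X i)

noncomputable def cumulantGen (t : ℝ) : ℝ := log (mgfDeriv p X 0 t)

theorem hasDerivAt_mgfDeriv (n : ℕ) (t : ℝ) :
    HasDerivAt (mgfDeriv p X n) (mgfDeriv p X (n + 1) t) t := by
  have h : ∀ i, HasDerivAt (fun t => p i * X i ^ n * exp (t * X i))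
      (p i * X i ^ (n + 1) * exp (t * X i)) t := fun i =>
    (((hasDerivAt_id' t).mul_const (X i)).exp.const_mul (p i * X i ^ n)).congr_deriv (by ring)
  exact HasDerivAt.fun_sum fun i _ => h i

theorem mgfDeriv_apply_zero (n : ℕ) : mgfDeriv p X n 0 = ∑ i, p i * X i ^ n := by
  simp [mgfDeriv]

variable {p}

theorem mgfDeriv_zero_pos (hp : ∀ i, 0 ≤ p i) (hp_sum : 0 < ∑ i, p i) (t : ℝ) :
    0 < mgfDeriv p X 0 t := by
  obtain ⟨i, -, hi⟩ := Finset.exists_lt_of_sum_lt (f := fun _ => (0 : ℝ)) (by simpa using hp_sum)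
  simp only [mgfDeriv, pow_zero, mul_one]
  exact Finset.sum_pos' (fun j _ => mul_nonneg (hp j) (exp_pos _).le)
    ⟨i, Finset.mem_univ i, mul_pos hi (exp_pos _)⟩

theorem hasDerivAt_cumulantGen (hp : ∀ i, 0 ≤ p i) (hp_sum : 0 < ∑ i, p i) (t : ℝ) :
    HasDerivAt (cumulantGen p X) (mgfDeriv p X 1 t / mgfDeriv p X 0 t) t :=
  (hasDerivAt_mgfDeriv p X 0 t).log (mgfDeriv_zero_pos X hp hp_sum t).ne'

theorem cumulantGen_zero (hp_sum : ∑ i, p i = 1) : cumulantGen p X 0 = 0 := by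
  simp [cumulantGen, mgfDeriv_apply_zero, hp_sum]

theorem hasDerivAt_deriv_cumulantGen_zero (hp_sum : ∑ i, p i = 1) :
    HasDerivAt (fun t => mgfDeriv p X 1 t / mgfDeriv p X 0 t)
      (∑ i, p i * X i ^ 2 - (∑ i, p i * X i) ^ 2) 0 := by
  have h0 : mgfDeriv p X 0 0 = 1 := by simp [mgfDeriv_apply_zero, hp_sum]
  refine ((hasDerivAt_mgfDeriv p X 1 0).div (hasDerivAt_mgfDeriv p X 0 0) (by simp [h0]))
    |>.congr_deriv ?_
  simp only [h0, mgfDeriv_apply_zero, zero_add, one_add_one_eq_two, pow_one]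
  ring

theorem tendsto_cumulantGen_sub_div_sq (hp : ∀ i, 0 ≤ p i) (hp_sum : ∑ i, p i = 1) :
    Tendsto (fun t => (cumulantGen p X t - t * ∑ i, p i * X i) / t ^ 2) (𝓝[≠] 0)
      (𝓝 ((∑ i, p i * X i ^ 2 - (∑ i, p i * X i) ^ 2) / 2)) := by
  have hmass : 0 < ∑ i, p i := hp_sum ▸ one_pos
  have h := tendsto_sub_sub_div_sq_nhdsNE
    (Eventually.of_forall (hasDerivAt_cumulantGen X hp hmass))
    (hasDerivAt_deriv_cumulantGen_zero X hp_sum)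
  simpa [cumulantGen_zero X hp_sum, mgfDeriv_apply_zero, hp_sum] using h

end WeightedMGF

theorem evar_second_order_expansion_general
    {Λ : Type*} [Fintype Λ]
    (p : Λ → ℝ) (hnn : ∀ l : Λ, 0 ≤ p l) (hsum : ∑ l : Λ, p l = 1)
    (R : Λ → ℝ) :
    Tendsto (fun μ : ℝ =>
        ((-(1 / μ) * Real.log (∑ l : Λ, p l * Real.exp (-μ * R l))) -
            ∑ l : Λ, p l * R l) / μ)
      (nhdsWithin 0 {(0 : ℝ)}ᶜ)
      (nhds (-(1 / 2) * ((∑ l : Λ, p l * (R l) ^ 2) - (∑ l : Λ, p l * R l) ^ 2))) := by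
  have h := (tendsto_cumulantGen_sub_div_sq (fun l => -R l) hnn hsum).neg
  have hvar : -((∑ l, p l * (-R l) ^ 2 - (∑ l, p l * -R l) ^ 2) / 2) =
      -(1 / 2) * ((∑ l, p l * R l ^ 2) - (∑ l, p l * R l) ^ 2) := by
    simp only [neg_sq, mul_neg, Finset.sum_neg_distrib]
    ring
  rw [← hvar]
  refine h.congr' ?_
  filter_upwards [self_mem_nhdsWithin] with μ (hμ : μ ≠ 0)
  simp only [cumulantGen, mgfDeriv, pow_zero, mul_one, mul_neg, neg_mul, Finset.sum_neg_distrib]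
  field_simp
  ring

/-- Second-order Taylor expansion of the entropic (EVaR) objective: with
`CE(μ) = −(1/μ)·log ∑ λ, p(λ)·exp(−μ R(λ))`, the quotient `(CE(μ) − E[R])/μ`
tends to `−(1/2)·Var(R)` as `μ → 0` over `μ ≠ 0`. -/
theorem evar_second_order_expansion
    {Λ : Type*} [Fintype Λ] [Nonempty Λ]
    (p : Λ → ℝ) (hnn : ∀ l : Λ, 0 ≤ p l) (hsum : ∑ l : Λ, p l = 1)
    (R : Λ → ℝ) :
    Tendsto (fun μ : ℝ =>
        ((-(1 / μ) * Real.log (∑ l : Λ, p l * Real.exp (-μ * R l))) -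
            ∑ l : Λ, p l * R l) / μ)
      (nhdsWithin 0 {(0 : ℝ)}ᶜ)
      (nhds (-(1 / 2) * ((∑ l : Λ, p l * (R l) ^ 2) - (∑ l : Λ, p l * R l) ^ 2))) :=
  evar_second_order_expansion_general p hnn hsum R
end

section
/- Let ι be a finite nonempty type and for each m ∈ ι let E_m be a finite-dimensional real inner product space; equip the product E = PiLp 2 E_m with its L² inner product. Let J : E → ℝ be differentiable with continuous gradient ∇J : E → E, let α ∈ ℝ with α ≠ 0, and let z : ℕ → E satisfy z_{n+1} = z_n + α • ∇J(z_n) for all n. If z_n converges to z* ∈ E, then for every agent m ∈ ι, the gradient of the section x ↦ J(Function.update z* m x) at z*(m) is zero. -/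
/-!
Passing to the limit in `z (n + 1) - z n = α • ∇J (z n)` gives `α • ∇J z⋆ = 0`, so `z⋆` is a
critical point of `J`. Each agent's section `x ↦ J (update z⋆ m x)` is `J` composed with an
affine map through `z⋆`, so its derivative at `z⋆ m` is the zero derivative of `J` composed
with the block inclusion, which vanishes.
-/

open Filter Topology

theorem apply_eq_zero_of_tendsto_of_succ_eq_add_smul
    {𝕜 V : Type*} [Field 𝕜] [AddCommGroup V] [Module 𝕜 V] [TopologicalSpace V]
    [IsTopologicalAddGroup V] [T2Space V] [ContinuousConstSMul 𝕜 V]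
    {F : V → V} {α : 𝕜} (hα : α ≠ 0) {z : ℕ → V}
    (hz : ∀ n, z (n + 1) = z n + α • F (z n)) {zstar : V} (hconv : Tendsto z atTop (𝓝 zstar))
    (hF : ContinuousAt F zstar) : F zstar = 0 := by
  have hstep : Tendsto (fun n => α • F (z n)) atTop (𝓝 0) := by
    simpa [hz] using ((tendsto_add_atTop_iff_nat 1).2 hconv).sub hconv
  have hlimit : Tendsto (fun n => α • F (z n)) atTop (𝓝 (α • F zstar)) :=
    (hF.tendsto.comp hconv).const_smul α
  exact (smul_eq_zero.mp (tendsto_nhds_unique hlimit hstep)).resolve_left hα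

theorem PiLp.hasFDerivAt_comp_update_zero
    {𝕜 ι : Type*} [NontriviallyNormedField 𝕜] [Fintype ι] [DecidableEq ι]
    {p : ENNReal} [Fact (1 ≤ p)]
    {E : ι → Type*} [∀ m, NormedAddCommGroup (E m)] [∀ m, NormedSpace 𝕜 (E m)]
    {G : Type*} [NormedAddCommGroup G] [NormedSpace 𝕜 G]
    {f : PiLp p E → G} {x : PiLp p E} (hf : HasFDerivAt f (0 : PiLp p E →L[𝕜] G) x) (m : ι) :
    HasFDerivAt (fun y : E m => f (WithLp.toLp p (Function.update x m y)))
      (0 : E m →L[𝕜] G) (x m) := by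
  have htoLp : HasFDerivAt (WithLp.toLp p : (∀ i, E i) → PiLp p E)
      ((PiLp.continuousLinearEquiv p 𝕜 E).symm : (∀ i, E i) →L[𝕜] PiLp p E)
      (Function.update x.ofLp m (x m)) :=
    (PiLp.continuousLinearEquiv p 𝕜 E).symm.hasFDerivAt
  have hf' : HasFDerivAt f (0 : PiLp p E →L[𝕜] G)
      (WithLp.toLp p (Function.update x.ofLp m (x m))) := by
    simpa using hf
  simpa [Function.comp_def] using
    hf'.comp (x m) (htoLp.comp (x m) (hasFDerivAt_update x.ofLp (x m)))

theorem gradient_eq_zero_of_hasFDerivAt_zero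
    {𝕜 F : Type*} [RCLike 𝕜] [NormedAddCommGroup F] [InnerProductSpace 𝕜 F] [CompleteSpace F]
    {f : F → 𝕜} {x : F} (hf : HasFDerivAt f (0 : F →L[𝕜] 𝕜) x) : gradient f x = 0 := by
  simp [gradient, hf.fderiv]

theorem gradient_ascent_limit_blockwise_stationary_general
    {ι : Type*} [Fintype ι] [DecidableEq ι]
    {E : ι → Type*} [∀ m, NormedAddCommGroup (E m)] [∀ m, InnerProductSpace ℝ (E m)]
    [∀ m, FiniteDimensional ℝ (E m)]
    (J : PiLp 2 E → ℝ) (hJ : Differentiable ℝ J)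
    (hgrad : Continuous (gradient J))
    (α : ℝ) (hα : α ≠ 0)
    (z : ℕ → PiLp 2 E)
    (hz : ∀ n : ℕ, z (n + 1) = z n + α • gradient J (z n))
    (zstar : PiLp 2 E) (hconv : Tendsto z atTop (nhds zstar)) :
    ∀ m : ι,
      gradient (fun x : E m => J (WithLp.toLp 2 (Function.update zstar m x))) (zstar m) = 0 := by
  intro m
  have hcrit : gradient J zstar = 0 :=
    apply_eq_zero_of_tendsto_of_succ_eq_add_smul hα hz hconv hgrad.continuousAt
  have hJ0 : HasFDerivAt J (0 : PiLp 2 E →L[ℝ] ℝ) zstar := by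
    simpa [hcrit] using (hJ zstar).hasGradientAt.hasFDerivAt
  exact gradient_eq_zero_of_hasFDerivAt_zero (PiLp.hasFDerivAt_comp_update_zero hJ0 m)

/-- First-order form of Theorem 2 of the paper: at the convergence point of the
gradient-update algorithm on the common payoff `J` over the `L²` product
parameter space, each agent's section of `J` is stationary at its block of the
limit point (no first-order improving unilateral deviation). -/
theorem gradient_ascent_limit_blockwise_stationary
    {ι : Type*} [Fintype ι] [Nonempty ι] [DecidableEq ι]
    {E : ι → Type*} [∀ m, NormedAddCommGroup (E m)] [∀ m, InnerProductSpace ℝ (E m)]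
    [∀ m, FiniteDimensional ℝ (E m)]
    (J : PiLp 2 E → ℝ) (hJ : Differentiable ℝ J)
    (hgrad : Continuous (gradient J))
    (α : ℝ) (hα : α ≠ 0)
    (z : ℕ → PiLp 2 E)
    (hz : ∀ n : ℕ, z (n + 1) = z n + α • gradient J (z n))
    (zstar : PiLp 2 E) (hconv : Tendsto z atTop (nhds zstar)) :
    ∀ m : ι,
      gradient (fun x : E m => J (WithLp.toLp 2 (Function.update zstar m x))) (zstar m) = 0 :=
  gradient_ascent_limit_blockwise_stationary_general J hJ hgrad α hα z hz zstar hconv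
end
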